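/- arXiv:1405.5257 — 7 statements merged into one kernel-verified Lean document; each statement's English description precedes it below -/
import Mathlib

section
/- Let p be a prime, n ≥ 1, and q = p^n. Let E be a field extension of the finite field 𝔽_q, and let K be an intermediate field 𝔽_q ⊆ K ⊆ E such that K is algebraic over 𝔽_q and the degree [K : 𝔽_q] is infinite. Let m ∈ ℕ and let ε₁, …, ε_m ∈ E be elements each of which is transcendental over 𝔽_q. Then K is not contained in the subfield 𝔽_q(ε₁, …, ε_m) of E generated by 𝔽_q and ε₁, …, ε_m. -/
/-!
Choose a transcendence basis `B` of `𝔽_q(ε)` among the `εᵢ`. An element `a` algebraic over `𝔽_q`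
has the same degree over `𝔽_q(B)` as over `𝔽_q`: its minimal polynomial over the integrally
closed ring `𝔽_q[B]` divides the one over `𝔽_q`, and specialising `B` to `0` turns it into a
factor of the same degree of an irreducible polynomial. Hence every element of `K` has degree at
most `D = [𝔽_q(ε) : 𝔽_q(B)]`, so all of them are roots of `X ^ q ^ D! - X`.
-/

open Polynomial IntermediateField

theorem finite_setOf_isIntegral_natDegree_minpoly_le {F E : Type*} [Field F] [Finite F]
    [Field E] [Algebra F E] (D : ℕ) :
    {x : E | IsIntegral F x ∧ (minpoly F x).natDegree ≤ D}.Finite := by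
  refine ((X ^ Nat.card F ^ D.factorial - X : F[X]).rootSet_finite E).subset ?_
  rintro x ⟨hx, hdeg⟩
  have hdvd : minpoly F x ∣ X ^ Nat.card F ^ D.factorial - X :=
    (minpoly.irreducible hx).natDegree_dvd_iff_dvd_X_pow_card_pow_sub_X.mp
      (Nat.dvd_factorial (minpoly.natDegree_pos hx) hdeg)
  rw [mem_rootSet]
  exact ⟨FiniteField.X_pow_card_pow_sub_X_ne_zero F D.factorial_ne_zero Finite.one_lt_card,
    minpoly.dvd_iff.mp hdvd⟩

theorem minpoly.natDegree_eq_of_algHom {F A E : Type*} [Field F] [CommRing A] [IsDomain A]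
    [IsIntegrallyClosed A] [Algebra F A] [CommRing E] [IsDomain E] [Algebra F E] [Algebra A E]
    [IsScalarTower F A E] [Module.IsTorsionFree A E] (φ : A →ₐ[F] F) {a : E}
    (ha : IsIntegral F a) : (minpoly A a).natDegree = (minpoly F a).natDegree := by
  have haA : IsIntegral A a := ha.tower_top
  have hdvd : (minpoly A a).map (φ : A →+* F) ∣ minpoly F a := by
    simpa [Polynomial.map_map] using Polynomial.map_dvd (φ : A →+* F)
      (minpoly.isIntegrallyClosed_dvd haA (p := (minpoly F a).map (algebraMap F A))
        (by rw [aeval_map_algebraMap, minpoly.aeval]))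
  have hmonic : ((minpoly A a).map (φ : A →+* F)).Monic := (minpoly.monic haA).map _
  have hassoc : Associated (minpoly F a) ((minpoly A a).map (φ : A →+* F)) := by
    refine ((minpoly.irreducible ha).dvd_iff.mp hdvd).resolve_left fun hu ↦ ?_
    have := congrArg natDegree (hmonic.isUnit_iff.mp hu)
    rw [(minpoly.monic haA).natDegree_map, natDegree_one] at this
    exact (minpoly.natDegree_pos haA).ne' this
  rw [← (minpoly.monic haA).natDegree_map (φ : A →+* F),
    eq_of_monic_of_associated (minpoly.monic ha) hmonic hassoc]

open IntermediateField.algebraAdjoinAdjoin in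
theorem AlgebraicIndependent.minpoly_adjoin_eq_map {F E ι : Type*} [Field F] [Field E]
    [Algebra F E] {x : ι → E} (hx : AlgebraicIndependent F x) {a : E} (ha : IsIntegral F a) :
    minpoly (adjoin F (Set.range x)) a = (minpoly F a).map (algebraMap F _) := by
  set A := Algebra.adjoin F (Set.range x)
  have : UniqueFactorizationMonoid A :=
    hx.aevalEquiv.toMulEquiv.uniqueFactorizationMonoid inferInstance
  have haA : IsIntegral A a := ha.tower_top
  let φ : A →ₐ[F] F := (MvPolynomial.aeval fun _ ↦ 0).comp hx.aevalEquiv.symm.toAlgHom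
  refine (eq_of_monic_of_dvd_of_natDegree_le (minpoly.monic ha.tower_top)
    ((minpoly.monic ha).map _) (minpoly.dvd_map_of_isScalarTower F _ a) ?_).symm
  rw [minpoly.isIntegrallyClosed_eq_field_fractions' (adjoin F (Set.range x)) haA,
    (minpoly.monic haA).natDegree_map, (minpoly.monic ha).natDegree_map,
    minpoly.natDegree_eq_of_algHom φ ha]

theorem IntermediateField.exists_natDegree_minpoly_le_of_finite {F E : Type*} [Field F]
    [Field E] [Algebra F E] {s : Set E} (hs : s.Finite) :
    ∃ D, ∀ a ∈ adjoin F s, IsIntegral F a → (minpoly F a).natDegree ≤ D := by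
  obtain ⟨B, hB⟩ := (AlgebraicIndependent.matroid F E).exists_isBasis s
  obtain ⟨hBind, -, hsalg⟩ := AlgebraicIndependent.matroid_isBasis_iff.mp hB
  have hBind : AlgebraicIndependent F ((↑) : B → E) := hBind
  set M := adjoin F B
  have : Finite s := hs.to_subtype
  have : FiniteDimensional M (adjoin M s) :=
    finiteDimensional_adjoin fun y hy ↦ IsAlgebraic.isIntegral
      ((hsalg y hy).tower_top_of_subalgebra_le (algebra_adjoin_le_adjoin F B))
  refine ⟨Module.finrank M (adjoin M s), fun a ha haF ↦ ?_⟩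
  have ha' : a ∈ adjoin M s :=
    (adjoin_le_iff.mpr (subset_adjoin M s) : adjoin F s ≤ (adjoin M s).restrictScalars F) ha
  have hdeg := congrArg natDegree (hBind.minpoly_adjoin_eq_map haF)
  rw [Subtype.range_coe, (minpoly.monic haF).natDegree_map] at hdeg
  rw [← hdeg, ← minpoly_eq ⟨a, ha'⟩]
  have := Module.Free.of_divisionRing M (adjoin M s)
  exact minpoly.natDegree_le _

theorem intermediateField_not_le_adjoin_transcendentals_general
    (p n : ℕ) [Fact p.Prime]
    (E : Type*) [Field E] [Algebra (GaloisField p n) E]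
    (K : IntermediateField (GaloisField p n) E)
    (halg : Algebra.IsAlgebraic (GaloisField p n) K)
    (hinf : ¬ FiniteDimensional (GaloisField p n) K)
    (m : ℕ) (ε : Fin m → E) :
    ¬ K ≤ IntermediateField.adjoin (GaloisField p n) (Set.range ε) := by
  intro hle
  obtain ⟨D, hD⟩ := exists_natDegree_minpoly_le_of_finite (F := GaloisField p n)
    (Set.finite_range ε)
  have hint (x : E) (hx : x ∈ K) : IsIntegral (GaloisField p n) x :=
    isIntegral_iff.mp (halg.isAlgebraic ⟨x, hx⟩).isIntegral
  have hfin : (K : Set E).Finite :=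
    (finite_setOf_isIntegral_natDegree_minpoly_le D).subset
      fun x hx ↦ ⟨hint x hx, hD x (hle hx) (hint x hx)⟩
  have : Finite K := hfin.to_subtype
  exact hinf Module.Finite.of_finite

/-- Let `q = p^n` (`p` prime, `n ≥ 1`) and let `E` be a field extension of
the finite field `𝔽_q`. Let `K` be an intermediate field `𝔽_q ⊆ K ⊆ E` which is algebraic over
`𝔽_q` and of infinite degree over `𝔽_q`. Then for any `m` elements `ε₁, …, ε_m` of `E`, each
transcendental over `𝔽_q`, the field `K` is not contained in `𝔽_q(ε₁, …, ε_m)`. -/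
theorem intermediateField_not_le_adjoin_transcendentals
    (p n : ℕ) [Fact p.Prime] (hn : 1 ≤ n)
    (E : Type*) [Field E] [Algebra (GaloisField p n) E]
    (K : IntermediateField (GaloisField p n) E)
    (halg : Algebra.IsAlgebraic (GaloisField p n) K)
    (hinf : ¬ FiniteDimensional (GaloisField p n) K)
    (m : ℕ) (ε : Fin m → E) (hε : ∀ i, Transcendental (GaloisField p n) (ε i)) :
    ¬ K ≤ IntermediateField.adjoin (GaloisField p n) (Set.range ε) :=
  intermediateField_not_le_adjoin_transcendentals_general p n E K halg hinf m ε
end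

section
/- Let p be a prime and let L be a field extension of 𝔽_p that is finitely generated as a field extension, i.e., L = 𝔽_p(α₁, …, α_r) for finitely many elements α₁, …, α_r ∈ L. Then there exist a finite subfield k of L and finitely many elements ε₁, …, ε_m ∈ L, each transcendental over k, such that L = k(ε₁, …, ε_m). -/
/-!
Split the generators into those algebraic over `𝔽_p` and the transcendental ones. The algebraic
ones generate a finite extension `k` of `𝔽_p`, hence a finite field; since `k / 𝔽_p` is algebraic,
the remaining generators stay transcendental over `k`, and they generate `L` over `k`.
-/

namespace IntermediateField
variable {F L : Type*} [Field F] [Field L] [Algebra F L]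

theorem adjoin_adjoin_eq_top_of_union_eq_top {S T : Set L} (h : adjoin F (S ∪ T) = ⊤) :
    adjoin (adjoin F S) T = ⊤ := by
  rw [← restrictScalars_eq_top_iff (K := F), adjoin_adjoin_left, h]

theorem finite_adjoin_of_isAlgebraic [Finite F] {S : Set L} (hS : S.Finite)
    (halg : ∀ x ∈ S, IsAlgebraic F x) : Finite (adjoin F S) :=
  have := hS.to_subtype
  have := finiteDimensional_adjoin fun x hx ↦ (halg x hx).isIntegral
  Module.finite_of_finite F

theorem transcendental_adjoin_of_isAlgebraic {S : Set L} (halg : ∀ x ∈ S, IsAlgebraic F x)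
    {x : L} (hx : Transcendental F x) : Transcendental (adjoin F S) x :=
  have := isAlgebraic_adjoin fun y hy ↦ (halg y hy).isIntegral
  (Algebra.IsAlgebraic.transcendental_iff F _).mp hx

end IntermediateField

open IntermediateField in
/-- Let `L` be a finitely generated field extension of `𝔽_p = ZMod p`
(`p` prime). Then there exist a finite subfield `k ⊆ L` and finitely many elements
`ε₁, …, ε_m ∈ L`, each transcendental over `k`, such that `L = k(ε₁, …, ε_m)`. -/
theorem exists_finite_subfield_and_transcendental_generators
    (p : ℕ) [Fact p.Prime] (L : Type*) [Field L] [Algebra (ZMod p) L]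
    (hfg : ∃ s : Finset L, IntermediateField.adjoin (ZMod p) (s : Set L) = ⊤) :
    ∃ (k : Subfield L), Finite k ∧
      ∃ (m : ℕ) (ε : Fin m → L), (∀ i, Transcendental k (ε i)) ∧
        IntermediateField.adjoin k (Set.range ε) = ⊤ := by
  obtain ⟨s, hs⟩ := hfg
  set A := {x ∈ (s : Set L) | IsAlgebraic (ZMod p) x}
  have hA : A ∪ ((s : Set L) \ A) = s := Set.union_sdiff_cancel (Set.sep_subset _ _)
  obtain ⟨m, ε, -, hε⟩ := (s.finite_toSet.sdiff (t := A)).fin_param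
  refine ⟨(adjoin (ZMod p) A).toSubfield,
    finite_adjoin_of_isAlgebraic (s.finite_toSet.subset (Set.sep_subset _ _)) fun x hx ↦ hx.2,
    m, ε, fun i ↦ ?_, ?_⟩
  · have hi : ε i ∈ (s : Set L) \ A := hε ▸ Set.mem_range_self i
    exact transcendental_adjoin_of_isAlgebraic (fun x hx ↦ hx.2) fun halg ↦ hi.2 ⟨hi.1, halg⟩
  · rw [hε]
    exact adjoin_adjoin_eq_top_of_union_eq_top (by rwa [hA])
end

section
/- Let G be a topological group that is topologically finitely generated, i.e., there exists a finite subset S ⊆ G such that the subgroup generated by S is dense in G. Then for every N ∈ ℕ, the set of open subgroups of G of index at most N is finite. -/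
/-!
An open subgroup `H` is also closed, so it is the closure of `H ∩ Γ` for the dense subgroup
`Γ = ⟨S⟩`; hence `H` is determined by `H ∩ Γ`, a subgroup of index at most `N` in `Γ`. A subgroup
of index at most `N` in any group is the preimage of a point stabiliser under the action on its
cosets, which embeds in `Perm (Fin N)`; as `Γ` is finitely generated there are only finitely many
homomorphisms `Γ →* Perm (Fin N)`, each determined by its values on `S`.
-/

theorem IsClopen.closure_inter_of_dense {X : Type*} [TopologicalSpace X] {U D : Set X}
    (hU : IsClopen U) (hD : Dense D) : closure (U ∩ D) = U :=
  (closure_minimal Set.inter_subset_left hU.isClosed).antisymm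
    (hD.open_subset_closure_inter hU.isOpen)

instance MonoidHom.finite_of_fg {G M : Type*} [Group G] [Monoid M] [Group.FG G] [Finite M] :
    Finite (G →* M) := by
  obtain ⟨S, hS⟩ := Group.fg_def.1 ‹Group.FG G›
  exact Finite.of_injective (fun f : G →* M => fun s : S => f s) fun f g hfg =>
    MonoidHom.eq_of_eqOn_dense hS fun s hs => congrFun hfg ⟨s, hs⟩

namespace Subgroup

variable {G : Type*} [Group G]

theorem exists_eq_comap_stabilizer_of_index_le {K : Subgroup G} {N : ℕ} (hK : K.index ≠ 0)
    (hKN : K.index ≤ N) : ∃ (f : G →* Equiv.Perm (Fin N)) (p : Fin N),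
      K = (MulAction.stabilizer (Equiv.Perm (Fin N)) p).comap f := by
  have := fintypeOfIndexNeZero hK
  obtain ⟨e⟩ : Nonempty ((G ⧸ K) ↪ Fin N) :=
    Function.Embedding.nonempty_of_card_le <| by
      rwa [Fintype.card_fin, ← Nat.card_eq_fintype_card, ← index_eq_card]
  refine ⟨(Equiv.Perm.viaEmbeddingHom e).comp (MulAction.toPermHom G (G ⧸ K)), e (1 : G), ?_⟩
  ext g
  simp [Equiv.Perm.viaEmbeddingHom_apply, Equiv.Perm.viaEmbedding_apply, Equiv.Perm.smul_def,
    QuotientGroup.eq]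

variable (G) in
theorem finite_setOf_index_le [Group.FG G] (N : ℕ) :
    {K : Subgroup G | K.index ≠ 0 ∧ K.index ≤ N}.Finite :=
  (Set.finite_range fun fp : (G →* Equiv.Perm (Fin N)) × Fin N =>
    (MulAction.stabilizer (Equiv.Perm (Fin N)) fp.2).comap fp.1).subset
    fun _K ⟨hK, hKN⟩ =>
      let ⟨f, p, hfp⟩ := exists_eq_comap_stabilizer_of_index_le hK hKN
      ⟨(f, p), hfp.symm⟩

theorem injOn_subgroupOf_of_dense [TopologicalSpace G] [SeparatelyContinuousMul G]
    {Γ : Subgroup G} (hΓ : Dense (Γ : Set G)) :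
    Set.InjOn (fun H : Subgroup G => H.subgroupOf Γ) {H | IsOpen (H : Set G)} := by
  intro H hH K hK hHK
  have hclopen (L : Subgroup G) (hL : IsOpen (L : Set G)) : IsClopen (L : Set G) :=
    ⟨L.isClosed_of_isOpen hL, hL⟩
  apply SetLike.coe_injective
  rw [← (hclopen H hH).closure_inter_of_dense hΓ, ← (hclopen K hK).closure_inter_of_dense hΓ,
    ← coe_inf, ← coe_inf, subgroupOf_inj.1 hHK]

theorem index_ne_zero_and_le_of_mk_le {H : Subgroup G} {N : ℕ}
    (hH : Cardinal.mk (G ⧸ H) ≤ N) : H.index ≠ 0 ∧ H.index ≤ N := by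
  have : Finite (G ⧸ H) := Cardinal.lt_aleph0_iff_finite.1 (hH.trans_lt Cardinal.natCast_lt_aleph0)
  exact ⟨index_ne_zero_of_finite,
    (Cardinal.toNat_le_toNat hH Cardinal.natCast_lt_aleph0).trans_eq (Cardinal.toNat_natCast N)⟩

end Subgroup

/-- If `G` is a topologically finitely generated topological group
(some finite subset generates a dense subgroup), then for every `N` the collection of
open subgroups of `G` whose index (as the cardinality of the set of left cosets) is at
most `N` is finite. -/
theorem finite_open_subgroups_of_index_le
    (G : Type*) [Group G] [TopologicalSpace G] [IsTopologicalGroup G]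
    (S : Finset G) (hS : Dense (Subgroup.closure (S : Set G) : Set G)) (N : ℕ) :
    {H : Subgroup G | IsOpen (H : Set G) ∧ Cardinal.mk (G ⧸ H) ≤ N}.Finite := by
  set Γ := Subgroup.closure (S : Set G)
  have : Group.FG Γ := (Group.fg_iff_subgroup_fg Γ).2 ⟨S, rfl⟩
  refine Set.Finite.of_finite_image ((Subgroup.finite_setOf_index_le Γ N).subset ?_)
    ((Subgroup.injOn_subgroupOf_of_dense hS).mono fun H hH => hH.1)
  rintro _ ⟨H, ⟨-, hHN⟩, rfl⟩
  obtain ⟨hH, hHN⟩ := Subgroup.index_ne_zero_and_le_of_mk_le hHN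
  rw [← Subgroup.relIndex_top_right] at hH hHN
  exact ⟨mt (Subgroup.relIndex_eq_zero_of_le_right le_top) hH,
    (Subgroup.relIndex_le_of_le_right le_top hH).trans hHN⟩
end

section
/- Let K be a field and let a : ℕ → K be a surjective map. For each h ∈ ℕ set P_h = ∏_{i=0}^{h} (Y − a(i)) ∈ K[Y]. Then the subfield of the rational function field K(Y) generated by the prime field of K together with the set {P_h : h ∈ ℕ} contains the field K of constants. -/
/-!
The quotients `P_{h+1} / P_h = Y - a (h + 1)` put every `Y - a j` into the subfield, and
`(Y - a i) - (Y - a j) = a j` once `a i = 0`, which surjectivity of `a` provides.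
-/

open Polynomial Finset

theorem Subfield.mem_of_prod_range_succ_mem {L : Type*} [Field L] (S : Subfield L) {f : ℕ → L}
    (hf : ∀ i, f i ≠ 0) (hS : ∀ n, ∏ i ∈ range (n + 1), f i ∈ S) (n : ℕ) : f n ∈ S := by
  cases n with
  | zero => simpa using hS 0
  | succ n =>
    have hquot : f (n + 1) = (∏ i ∈ range (n + 1 + 1), f i) / ∏ i ∈ range (n + 1), f i := by
      rw [prod_range_succ _ (n + 1), mul_div_cancel_left₀ _ (prod_ne_zero_iff.mpr fun i _ => hf i)]
    rw [hquot]
    exact S.div_mem (hS (n + 1)) (hS n)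

theorem RatFunc.algebraMap_X_sub_C_sub_algebraMap_X_sub_C {K : Type*} [Field K] (x y : K) :
    algebraMap K[X] (RatFunc K) (Polynomial.X - Polynomial.C x) -
        algebraMap K[X] (RatFunc K) (Polynomial.X - Polynomial.C y) =
      algebraMap K (RatFunc K) (y - x) := by
  rw [← map_sub, sub_sub_sub_cancel_left, ← Polynomial.C_sub, algebraMap_C, algebraMap_eq_C]

/-- Let `K` be a field and `a : ℕ → K` surjective. For `h : ℕ` put
`P_h = ∏_{i=0}^{h} (Y - a i) ∈ K[Y]`. Then the subfield of the rational function field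
`K(Y)` generated by (the prime field and) the polynomials `P_h` contains every constant,
i.e. the image of `K`. -/
theorem constants_mem_subfield_closure_of_products
    (K : Type*) [Field K] (a : ℕ → K) (ha : Function.Surjective a) :
    ∀ c : K, algebraMap K (RatFunc K) c ∈
      Subfield.closure {x : RatFunc K | ∃ h : ℕ,
        x = algebraMap (Polynomial K) (RatFunc K)
          (∏ i ∈ Finset.range (h + 1), (Polynomial.X - Polynomial.C (a i)))} := by
  intro c
  set S := Subfield.closure {x : RatFunc K | ∃ h : ℕ,
    x = algebraMap K[X] (RatFunc K) (∏ i ∈ range (h + 1), (X - C (a i)))}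
  have hlinear : ∀ j, algebraMap K[X] (RatFunc K) (X - C (a j)) ∈ S := by
    refine S.mem_of_prod_range_succ_mem (fun i => RatFunc.algebraMap_ne_zero (X_sub_C_ne_zero _))
      fun n => ?_
    rw [← map_prod]
    exact Subfield.subset_closure ⟨n, rfl⟩
  obtain ⟨j, rfl⟩ := ha c
  obtain ⟨i, hi⟩ := ha 0
  have hdiff := S.sub_mem (hlinear i) (hlinear j)
  rwa [RatFunc.algebraMap_X_sub_C_sub_algebraMap_X_sub_C, hi, sub_zero] at hdiff
end

section
/- Let p be a prime, K a countable algebraically closed field of characteristic p, and a : ℕ → K a surjective map. For each h ∈ ℕ set P_h = ∏_{i=0}^{h} (Y − a(i)) ∈ K[Y]. Then there is no subfield F of the rational function field K(Y) such that F is finitely generated as a field extension of the prime field 𝔽_p and F contains P_h for every h ∈ ℕ. -/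
/-!
`F` contains each `X - a i`, the quotient of two consecutive products; since `a` is onto, it
contains `X` and every constant, so `F = K(X)`. The coefficients of the numerators and
denominators of finitely many generators of `K(X)` then generate `K`, because a constant lying in
`K₀(X)` lies in `K₀`. But an algebraically closed field is never finitely generated: over a
transcendence basis `x` of `K` over its prime field `k`, `K` is finite over `k(x)` while Eisenstein's
criterion makes every `X ^ n - x i` irreducible over `k(x)`; so `K` is finite over `k`, which is
absurd for `k = 𝔽_p` as `K` is infinite, and for `k = ℚ` by Eisenstein at `2`.
-/

open Polynomial

theorem Polynomial.irreducible_X_pow_sub_C_algebraMap_of_prime {R L : Type*} [CommRing R]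
    [IsDomain R] [IsIntegrallyClosed R] [Field L] [Algebra R L] [IsFractionRing R L] {π : R}
    (hπ : Prime π) {n : ℕ} (hn : n ≠ 0) : Irreducible (X ^ n - C (algebraMap R L π)) := by
  have hmonic : (X ^ n - C π : R[X]).Monic := monic_X_pow_sub_C π hn
  have hprime : (Ideal.span {π}).IsPrime := (Ideal.span_singleton_prime hπ.ne_zero).mpr hπ
  have hEisenstein : (X ^ n - C π : R[X]).IsEisensteinAt (Ideal.span {π}) := by
    refine hmonic.isEisensteinAt_of_mem_of_notMem hprime.ne_top (fun {k} hk => ?_) ?_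
    · rw [natDegree_X_pow_sub_C] at hk
      simp only [coeff_sub, coeff_X_pow, coeff_C, hk.ne, if_false, zero_sub, neg_mem_iff]
      split_ifs <;> simp
    · rw [Ideal.span_singleton_pow, Ideal.mem_span_singleton]
      simpa [coeff_C, hn.symm] using
        (pow_dvd_pow_iff (n := 2) (m := 1) hπ.ne_zero hπ.not_isUnit).not.mpr (by norm_num)
  have hirr := hEisenstein.irreducible hprime hmonic.isPrimitive
    (by rwa [natDegree_X_pow_sub_C, Nat.pos_iff_ne_zero])
  simpa using hmonic.irreducible_iff_irreducible_map_fraction_map.mp hirr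

theorem AlgebraicIndependent.irreducible_X_pow_sub_C {k K ι : Type*} [Field k] [Field K]
    [Algebra k K] {x : ι → K} (hx : AlgebraicIndependent k x) (i : ι) {n : ℕ} (hn : n ≠ 0) :
    Irreducible (X ^ n - C (⟨x i, IntermediateField.subset_adjoin k _ ⟨i, rfl⟩⟩ :
      IntermediateField.adjoin k (Set.range x))) := by
  have h := irreducible_X_pow_sub_C_algebraMap_of_prime (L := FractionRing (MvPolynomial ι k))
    (MvPolynomial.X_prime (R := k) (i := i)) hn
  rw [← MulEquiv.irreducible_iff (mapEquiv hx.aevalEquivField.toRingEquiv)] at h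
  convert h using 1
  simp only [mapEquiv_apply, Polynomial.map_sub, Polynomial.map_pow, map_X, map_C]
  congr 2
  exact Subtype.ext (by simp)

theorem IsAlgClosed.not_irreducible_X_pow_sub_C {L K : Type*} [Field L] [Field K] [IsAlgClosed K]
    [Algebra L K] [Module.Finite L K] (b : L) :
    ¬ Irreducible (X ^ (Module.finrank L K + 1) - C b) := fun h => by
  have hdvd := h.natDegree_dvd_finrank (L := K) (IsAlgClosed.splits _)
  simpa using Nat.le_of_dvd Module.finrank_pos hdvd

theorem IsAlgClosed.finite_of_essFiniteType (k K : Type*) [Field k] [Field K] [IsAlgClosed K]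
    [Algebra k K] [Algebra.EssFiniteType k K] : Module.Finite k K := by
  obtain ⟨ι, x, hx⟩ := exists_isTranscendenceBasis' k K
  have : Algebra.IsAlgebraic k K := by
    refine hx.isEmpty_iff_isAlgebraic.mp ⟨fun i => ?_⟩
    have := hx.isAlgebraic_field
    have := Algebra.EssFiniteType.of_comp k (IntermediateField.adjoin k (Set.range x)) K
    have := Algebra.finite_of_essFiniteType_of_isAlgebraic
      (F := IntermediateField.adjoin k (Set.range x)) (E := K)
    exact not_irreducible_X_pow_sub_C (K := K) _
      (hx.1.irreducible_X_pow_sub_C i (Nat.succ_ne_zero _))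
  exact Algebra.finite_of_essFiniteType_of_isAlgebraic

theorem Field.FG.essFiniteType {K : Type*} [Field K] (hK : Field.FG K) (k : Type*) [Field k]
    [Algebra k K] : Algebra.EssFiniteType k K := by
  obtain ⟨S, hS⟩ := hK
  rw [← IntermediateField.fg_top_iff]
  refine ⟨S, top_le_iff.mp fun y _ => ?_⟩
  have hy : y ∈ Subfield.closure (S : Set K) := hS ▸ Subfield.mem_top y
  rw [← IntermediateField.mem_toSubfield, IntermediateField.adjoin_toSubfield]
  exact Subfield.closure_mono Set.subset_union_right hy

theorem IsAlgClosed.not_fieldFG (K : Type*) [Field K] [IsAlgClosed K] : ¬ Field.FG K := by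
  intro hK
  obtain ⟨q, _⟩ := CharP.exists K
  rcases CharP.char_is_prime_or_zero K q with hq | rfl
  · have := Fact.mk hq
    let := ZMod.algebra K q
    have := hK.essFiniteType (ZMod q)
    have := finite_of_essFiniteType (ZMod q) K
    have : Finite K := Module.finite_of_finite (ZMod q)
    exact not_finite K
  · have := CharP.charP_to_charZero K
    have := hK.essFiniteType ℚ
    have := finite_of_essFiniteType ℚ K
    exact not_irreducible_X_pow_sub_C (K := K) (2 : ℚ) <| by
      simpa using irreducible_X_pow_sub_C_algebraMap_of_prime (L := ℚ) Int.prime_two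
        (Nat.succ_ne_zero _)

theorem Subfield.mem_of_forall_prod_range_mem {E : Type*} [Field E] {F : Subfield E} {f : ℕ → E}
    (hf : ∀ i, f i ≠ 0) (h : ∀ n, ∏ i ∈ Finset.range (n + 1), f i ∈ F) (n : ℕ) : f n ∈ F := by
  cases n with
  | zero => simpa using h 0
  | succ n =>
    have := F.div_mem (h (n + 1)) (h n)
    rwa [Finset.prod_range_succ _ (n + 1),
      mul_div_cancel_left₀ _ (Finset.prod_ne_zero_iff.mpr fun i _ => hf i)] at this

namespace RatFunc

variable {K : Type*} [Field K]

theorem eq_top_of_C_mem_of_X_mem {F : Subfield (RatFunc K)} (hC : ∀ c, C c ∈ F) (hX : X ∈ F) :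
    F = ⊤ := by
  rw [eq_top_iff, ← IntermediateField.top_toSubfield (F := K), ← adjoin_X,
    IntermediateField.adjoin_toSubfield, Subfield.closure_le, algebraMap_eq_C]
  rintro _ (⟨c, rfl⟩ | rfl)
  exacts [hC c, hX]

noncomputable def mapSubfield (K₀ : Subfield K) : RatFunc K₀ →+* RatFunc K :=
  mapRingHom (Polynomial.mapRingHom K₀.subtype)
    (nonZeroDivisors_le_comap_nonZeroDivisors_of_injective _
      (Polynomial.map_injective _ K₀.subtype_injective))

theorem mapSubfield_div (K₀ : Subfield K) (p q : K₀[X]) :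
    mapSubfield K₀ (algebraMap _ _ p / algebraMap _ _ q) =
      algebraMap _ _ (p.map K₀.subtype) / algebraMap _ _ (q.map K₀.subtype) := by
  rw [mapSubfield, coe_mapRingHom_eq_coe_map]
  exact map_apply_div _ _ p q

theorem mem_fieldRange_mapSubfield {K₀ : Subfield K} {f : RatFunc K}
    (hnum : ((num f).coeffs : Set K) ⊆ K₀) (hdenom : ((denom f).coeffs : Set K) ⊆ K₀) :
    f ∈ (mapSubfield K₀).fieldRange := by
  obtain ⟨p, hp⟩ := (mem_lifts (num f)).mp <|
    (lifts_iff_coeffs_subset_range (f := K₀.subtype) _).mpr <| by simpa using hnum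
  obtain ⟨q, hq⟩ := (mem_lifts (denom f)).mp <|
    (lifts_iff_coeffs_subset_range (f := K₀.subtype) _).mpr <| by simpa using hdenom
  exact ⟨algebraMap _ _ p / algebraMap _ _ q, by rw [mapSubfield_div, hp, hq, num_div_denom]⟩

theorem mem_of_C_mem_fieldRange_mapSubfield {K₀ : Subfield K} {c : K}
    (h : C c ∈ (mapSubfield K₀).fieldRange) : c ∈ K₀ := by
  obtain ⟨g, hg⟩ := h
  have hdenom : algebraMap K[X] (RatFunc K) ((denom g).map K₀.subtype) ≠ 0 :=
    algebraMap_ne_zero (Polynomial.map_ne_zero (denom_ne_zero g))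
  rw [← num_div_denom g, mapSubfield_div, div_eq_iff hdenom, ← algebraMap_C, ← map_mul,
    (algebraMap_injective K).eq_iff] at hg
  have hlead := congrArg leadingCoeff hg
  rw [leadingCoeff_map, leadingCoeff_mul, leadingCoeff_C, leadingCoeff_map,
    (monic_denom g).leadingCoeff, map_one, mul_one] at hlead
  exact hlead ▸ (leadingCoeff (num g)).2

end RatFunc

theorem Field.FG.of_ratFunc {K : Type*} [Field K] (h : Field.FG (RatFunc K)) : Field.FG K := by
  classical
  obtain ⟨S, hS⟩ := h
  set t := S.biUnion fun f => (RatFunc.num f).coeffs ∪ (RatFunc.denom f).coeffs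
  have hS_le : Subfield.closure (S : Set (RatFunc K)) ≤
      (RatFunc.mapSubfield (Subfield.closure (t : Set K))).fieldRange := by
    refine Subfield.closure_le.mpr fun f hf => RatFunc.mem_fieldRange_mapSubfield ?_ ?_ <;>
    · refine subset_trans (fun y hy => ?_) Subfield.subset_closure
      exact Finset.mem_biUnion.mpr ⟨f, hf, by simp_all⟩
  refine ⟨t, eq_top_iff.mpr fun c _ => RatFunc.mem_of_C_mem_fieldRange_mapSubfield (hS_le ?_)⟩
  exact hS ▸ Subfield.mem_top _

theorem no_finitelyGenerated_subfield_contains_all_products_general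
    (K : Type*) [Field K] [IsAlgClosed K] (a : ℕ → K) (ha : Function.Surjective a) :
    ¬ ∃ F : Subfield (RatFunc K),
        (∃ s : Finset (RatFunc K), F = Subfield.closure (s : Set (RatFunc K))) ∧
        (∀ h : ℕ, algebraMap (Polynomial K) (RatFunc K)
          (∏ i ∈ Finset.range (h + 1), (Polynomial.X - Polynomial.C (a i))) ∈ F) := by
  rintro ⟨_, ⟨s, rfl⟩, hP⟩
  have hlinear : ∀ i, RatFunc.X - RatFunc.C (a i) ∈ Subfield.closure (s : Set (RatFunc K)) :=
    Subfield.mem_of_forall_prod_range_mem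
      (fun i => by simpa using RatFunc.algebraMap_ne_zero (X_sub_C_ne_zero (a i)))
      (fun n => by simpa using hP n)
  obtain ⟨j, hj⟩ := ha 0
  have hX : RatFunc.X ∈ Subfield.closure (s : Set (RatFunc K)) := by simpa [hj] using hlinear j
  have hC : ∀ c, RatFunc.C c ∈ Subfield.closure (s : Set (RatFunc K)) := fun c => by
    obtain ⟨i, rfl⟩ := ha c
    simpa using sub_mem hX (hlinear i)
  exact IsAlgClosed.not_fieldFG K
    (Field.FG.of_ratFunc ⟨s, RatFunc.eq_top_of_C_mem_of_X_mem hC hX⟩)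

/-- Let `p` be a prime, `K` a countable algebraically closed field of
characteristic `p`, and `a : ℕ → K` surjective. For `h : ℕ` put
`P_h = ∏_{i=0}^{h} (Y - a i) ∈ K[Y] ⊆ K(Y)`. Then no subfield `F` of the rational
function field `K(Y)` which is finitely generated as a field extension of the prime
field `𝔽_p` (i.e. `F` is the subfield generated by finitely many elements) contains all
the `P_h`. -/
theorem no_finitelyGenerated_subfield_contains_all_products
    (p : ℕ) [Fact p.Prime] (K : Type*) [Field K] [IsAlgClosed K] [CharP K p]
    [Countable K] (a : ℕ → K) (ha : Function.Surjective a) :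
    ¬ ∃ F : Subfield (RatFunc K),
        (∃ s : Finset (RatFunc K), F = Subfield.closure (s : Set (RatFunc K))) ∧
        (∀ h : ℕ, algebraMap (Polynomial K) (RatFunc K)
          (∏ i ∈ Finset.range (h + 1), (Polynomial.X - Polynomial.C (a i))) ∈ F) :=
  no_finitelyGenerated_subfield_contains_all_products_general K a ha
end

section
/- Let p be a prime, K a field of characteristic p, and a : ℕ → K any sequence. Let R = K[y] and consider the free module M = R[x] × R[x] of rank two over the polynomial ring R[x]. For h ∈ ℕ set c_h = ∏_{i=0}^{h} (y − a(i)) ∈ R, and for k ∈ ℕ define the R-linear map D_k : M → M by D_k(f, g) = ( H_k(f) + Σ_{h ∈ ℕ, p^h ≤ k} H_{k − p^h}(g)·c_h , H_k(g) ), where H_j denotes the j-th Hasse derivative with respect to x (coefficients in R) and H_0 = id, so D_0 = id. Then for all k, l ∈ ℕ: (i) D_k ∘ D_l = C(k+l, k) · D_{k+l}, where C(k+l, k) is the binomial coefficient reduced modulo p; (ii) D_k ∘ D_l = D_l ∘ D_k; and (iii) for k ≥ 1 and all v ∈ M, D_k(x·v) = x·D_k(v) + D_{k−1}(v). -/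
open Polynomial

/-- The operator `D_k` of Statement 9, on the free module `M = R[x] × R[x]` of rank two
over `R[x]`, where `R = K[y]`.  Here `c_h = ∏_{i=0}^{h} (y - a i) ∈ R` and
`D_k (f, g) = (H_k f + Σ_{h, p^h ≤ k} H_{k - p^h}(g) · c_h , H_k g)`, the `H_j` being
the Hasse derivatives with respect to `x` (the sum over `h ∈ ℕ` with `p^h ≤ k` is finite
since `p ≥ 2` forces `h < k` for such `h`, so it is computed over `h < k + 1`). -/
noncomputable def strataOp (p : ℕ) {K : Type*} [Field K] (a : ℕ → K) (k : ℕ)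
    (v : Polynomial (Polynomial K) × Polynomial (Polynomial K)) :
    Polynomial (Polynomial K) × Polynomial (Polynomial K) :=
  (Polynomial.hasseDeriv k v.1 +
      ∑ h ∈ (Finset.range (k + 1)).filter (fun h => p ^ h ≤ k),
        Polynomial.hasseDeriv (k - p ^ h) v.2 *
          Polynomial.C (∏ i ∈ Finset.range (h + 1),
            (Polynomial.X - Polynomial.C (a i))),
    Polynomial.hasseDeriv k v.2)

/-!
`D_k` is the upper triangular operator `[[H_k, N_k], [0, H_k]]` with
`N_k = Σ_{p^h ≤ k} c_h H_{k - p^h}`. The diagonal satisfies the relations because the Hasse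
derivatives do. For the off-diagonal entry each `h` can be treated separately; with `q = p^h`,
relation (i) reduces to `C(k+l, k) = C(k+l-q, k) + C(k+l-q, k-q)`, the coefficient of `X^k` in
`(1 + X)^(k+l) = (1 + X)^(k+l-q) (1 + X^q)`, which holds in characteristic `p`. Relation (ii)
is (i) together with the symmetry of `C(k+l, k)`, and (iii) follows from the Leibniz rule
`H_{j+1}(x f) = x H_{j+1} f + H_j f`.
-/

open Finset

theorem Nat.cast_choose_eq_choose_sub_expChar_pow_add {S : Type*} [CommSemiring S] (p : ℕ)
    [ExpChar S p] {h n : ℕ} (m : ℕ) (hq : p ^ h ≤ n) :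
    (n.choose m : S) = ((n - p ^ h).choose m : S) +
      if p ^ h ≤ m then ((n - p ^ h).choose (m - p ^ h) : S) else 0 := by
  have frobenius :
      (X + 1 : S[X]) ^ n = (X + 1) ^ (n - p ^ h) * X ^ p ^ h + (X + 1) ^ (n - p ^ h) := by
    rw [← Nat.sub_add_cancel hq, pow_add, add_pow_expChar_pow, one_pow, mul_add, mul_one,
      Nat.add_sub_cancel]
  have := congrArg (coeff · m) frobenius
  simp only [coeff_X_add_one_pow, coeff_add, coeff_mul_X_pow'] at this
  rw [this, add_comm]

namespace Polynomial

variable {R : Type*} [CommSemiring R]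

theorem hasseDeriv_hasseDeriv (k l : ℕ) (f : R[X]) :
    hasseDeriv k (hasseDeriv l f) = ((k + l).choose k : R[X]) * hasseDeriv (k + l) f := by
  simpa [nsmul_eq_mul] using LinearMap.congr_fun (hasseDeriv_comp (R := R) k l) f

theorem hasseDeriv_C_mul (k : ℕ) (c : R) (f : R[X]) :
    hasseDeriv k (C c * f) = C c * hasseDeriv k f := by
  rw [← smul_eq_C_mul, map_smul, smul_eq_C_mul]

theorem hasseDeriv_succ_X_mul (k : ℕ) (f : R[X]) :
    hasseDeriv (k + 1) (X * f) = X * hasseDeriv (k + 1) f + hasseDeriv k f := by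
  ext n
  rcases n with _ | n
  · simp [hasseDeriv_coeff]
  · simp only [hasseDeriv_coeff, coeff_add, coeff_X_mul]
    rw [show n + 1 + (k + 1) = n + (k + 1) + 1 by omega, coeff_X_mul, Nat.choose_succ_succ',
      Nat.cast_add, add_mul, add_comm, Nat.add_right_comm n 1 k, ← Nat.add_assoc]

noncomputable def hasseDerivSub (q k : ℕ) (g : R[X]) : R[X] :=
  if q ≤ k then hasseDeriv (k - q) g else 0

theorem hasseDerivSub_succ_X_mul (q k : ℕ) (g : R[X]) :
    hasseDerivSub q (k + 1) (X * g) = X * hasseDerivSub q (k + 1) g + hasseDerivSub q k g := by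
  unfold hasseDerivSub
  rcases lt_trichotomy q (k + 1) with hlt | rfl | hgt
  · rw [if_pos hlt.le, if_pos hlt.le, if_pos (Nat.le_of_lt_succ hlt),
      show k + 1 - q = k - q + 1 by omega, hasseDeriv_succ_X_mul]
  · simp
  · rw [if_neg hgt.not_ge, if_neg hgt.not_ge, if_neg (by omega), mul_zero, add_zero]

theorem hasseDeriv_hasseDerivSub_add (p : ℕ) [ExpChar R p] (h k l : ℕ) (g : R[X]) :
    hasseDeriv k (hasseDerivSub (p ^ h) l g) + hasseDerivSub (p ^ h) k (hasseDeriv l g) =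
      ((k + l).choose k : R[X]) * hasseDerivSub (p ^ h) (k + l) g := by
  unfold hasseDerivSub
  by_cases hq : p ^ h ≤ k + l
  · have first : hasseDeriv k (if p ^ h ≤ l then hasseDeriv (l - p ^ h) g else 0) =
        ((k + l - p ^ h).choose k : R[X]) * hasseDeriv (k + l - p ^ h) g := by
      split_ifs with hl
      · rw [hasseDeriv_hasseDeriv, show k + (l - p ^ h) = k + l - p ^ h by omega]
      · rw [map_zero, Nat.choose_eq_zero_of_lt (by omega), Nat.cast_zero, zero_mul]
    have second : (if p ^ h ≤ k then hasseDeriv (k - p ^ h) (hasseDeriv l g) else 0) =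
        (if p ^ h ≤ k then ((k + l - p ^ h).choose (k - p ^ h) : R[X]) else 0) *
          hasseDeriv (k + l - p ^ h) g := by
      split_ifs with hk
      · rw [hasseDeriv_hasseDeriv, show k - p ^ h + l = k + l - p ^ h by omega]
      · rw [zero_mul]
    rw [first, second, ← add_mul, if_pos hq,
      Nat.cast_choose_eq_choose_sub_expChar_pow_add p k hq]
  · rw [if_neg (by omega), if_neg (by omega), if_neg hq, map_zero, zero_add, mul_zero]

end Polynomial

section Correction

variable {R : Type*} [CommSemiring R]

noncomputable def strataCorrection (p : ℕ) (c : ℕ → R) (k : ℕ) (g : R[X]) : R[X] :=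
  ∑ h ∈ range (k + 1), C (c h) * hasseDerivSub (p ^ h) k g

theorem strataCorrection_eq_sum_range {p : ℕ} (hp : 1 < p) (c : ℕ → R) {k M : ℕ} (hkM : k ≤ M)
    (g : R[X]) :
    strataCorrection p c k g = ∑ h ∈ range (M + 1), C (c h) * hasseDerivSub (p ^ h) k g := by
  refine sum_subset (range_subset_range.2 (by omega)) fun h _ hh => ?_
  have hk : k < p ^ h := (show k < h by simpa using hh).trans (Nat.lt_pow_self hp)
  rw [hasseDerivSub, if_neg hk.not_ge, mul_zero]

theorem hasseDeriv_strataCorrection_add {p : ℕ} [ExpChar R p] (hp : 1 < p) (c : ℕ → R)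
    (k l : ℕ) (g : R[X]) :
    hasseDeriv k (strataCorrection p c l g) + strataCorrection p c k (hasseDeriv l g) =
      ((k + l).choose k : R[X]) * strataCorrection p c (k + l) g := by
  rw [strataCorrection_eq_sum_range hp c (Nat.le_add_left l k),
    strataCorrection_eq_sum_range hp c (Nat.le_add_right k l), strataCorrection, map_sum,
    mul_sum, ← sum_add_distrib]
  refine sum_congr rfl fun h _ => ?_
  rw [hasseDeriv_C_mul, ← mul_add, hasseDeriv_hasseDerivSub_add, mul_left_comm]

theorem strataCorrection_succ_X_mul {p : ℕ} (hp : 1 < p) (c : ℕ → R) (k : ℕ) (g : R[X]) :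
    strataCorrection p c (k + 1) (X * g) =
      X * strataCorrection p c (k + 1) g + strataCorrection p c k g := by
  rw [strataCorrection_eq_sum_range hp c k.le_succ, strataCorrection, strataCorrection, mul_sum,
    ← sum_add_distrib]
  refine sum_congr rfl fun h _ => ?_
  rw [hasseDerivSub_succ_X_mul, mul_add, mul_left_comm]

end Correction

theorem strataOp_eq (p : ℕ) {K : Type*} [Field K] (a : ℕ → K) (k : ℕ) (v : K[X][X] × K[X][X]) :
    strataOp p a k v = (hasseDeriv k v.1 +
      strataCorrection p (fun h => ∏ i ∈ range (h + 1), (X - C (a i))) k v.2,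
      hasseDeriv k v.2) := by
  rw [strataOp, strataCorrection, sum_filter]
  congr 2
  refine sum_congr rfl fun h _ => ?_
  rw [hasseDerivSub]
  split_ifs <;> simp [mul_comm]

/-- Let `p` be a prime, `K` a field of characteristic `p`, and
`a : ℕ → K` any sequence. The operators `D_k = strataOp p a k` on
`M = K[y][x] × K[y][x]` satisfy, for all `k, l ∈ ℕ`:
(i) `D_k ∘ D_l = C(k+l, k) · D_{k+l}` (the binomial coefficient acting through the
characteristic-`p` ring `K[y][x]`, i.e. reduced mod `p`);
(ii) `D_k ∘ D_l = D_l ∘ D_k`; and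
(iii) for `k ≥ 1`, `D_k(x·v) = x·D_k(v) + D_{k-1}(v)`, where `x` multiplies
componentwise.  These are exactly the defining relations of the ring of relative
differential operators `𝒟_{𝔸²/𝔸¹}`, so they equip the rank-two bundle of the
counterexample with a stratification. -/
theorem strataOp_relations
    (p : ℕ) (hp : p.Prime) (K : Type*) [Field K] [CharP K p] (a : ℕ → K) :
    (∀ k l : ℕ, ∀ v : Polynomial (Polynomial K) × Polynomial (Polynomial K),
      strataOp p a k (strataOp p a l v) =
        (((k + l).choose k : Polynomial (Polynomial K))) • strataOp p a (k + l) v) ∧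
    (∀ k l : ℕ, ∀ v : Polynomial (Polynomial K) × Polynomial (Polynomial K),
      strataOp p a k (strataOp p a l v) = strataOp p a l (strataOp p a k v)) ∧
    (∀ k : ℕ, 1 ≤ k → ∀ v : Polynomial (Polynomial K) × Polynomial (Polynomial K),
      strataOp p a k (Polynomial.X * v.1, Polynomial.X * v.2) =
        (Polynomial.X * (strataOp p a k v).1, Polynomial.X * (strataOp p a k v).2) +
          strataOp p a (k - 1) v) := by
  have : Fact p.Prime := ⟨hp⟩
  have comp : ∀ k l : ℕ, ∀ v : K[X][X] × K[X][X],
      strataOp p a k (strataOp p a l v) =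
        ((k + l).choose k : K[X][X]) • strataOp p a (k + l) v := by
    intro k l v
    simp only [strataOp_eq, Prod.smul_mk, smul_eq_mul, Prod.mk.injEq]
    constructor
    · rw [map_add, add_assoc, hasseDeriv_strataCorrection_add hp.one_lt, hasseDeriv_hasseDeriv,
        mul_add]
    · exact hasseDeriv_hasseDeriv k l v.2
  refine ⟨comp, fun k l v => by rw [comp, comp, add_comm l k, Nat.choose_symm_add], ?_⟩
  intro k hk v
  obtain ⟨k, rfl⟩ := Nat.exists_eq_add_of_le' hk
  simp only [strataOp_eq, hasseDeriv_succ_X_mul, strataCorrection_succ_X_mul hp.one_lt,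
    Prod.mk_add_mk, Nat.add_sub_cancel, Prod.mk.injEq, and_true]
  ring
end

section
/- Let p be a prime, K a field of characteristic p, n ∈ ℕ, and a_0, …, a_n ∈ K. Define the polynomial w = Σ_{j=0}^{n−1} ( ∏_{i=0}^{j} (a_n − a_i) ) · x^{p^j} ∈ K[x]. Then: (i) for every h ∈ ℕ, the p^h-th Hasse derivative of w is the constant polynomial ∏_{i=0}^{h} (a_n − a_i), where for h ≥ n this product is 0 because its factor with i = n vanishes; and (ii) for every k ≥ 1 that is not a power of p, the k-th Hasse derivative of w is 0. -/
/-! In characteristic `p` the binomial coefficient `C(p ^ j, k)` vanishes unless `k = 0` or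
`k = p ^ j`, so the `k`-th Hasse derivative of a `p`-polynomial `∑ c_j X ^ (p ^ j)` kills every
term except `c_j X ^ (p ^ j)` with `p ^ j = k`, which it sends to the constant `c_j`. -/

open Polynomial Finset

section HasseDeriv

variable {R : Type*} [Semiring R]

theorem hasseDeriv_monomial_self (m : ℕ) (c : R) : hasseDeriv m (monomial m c) = C c := by
  rw [hasseDeriv_monomial, Nat.choose_self, Nat.cast_one, one_mul, Nat.sub_self,
    monomial_zero_left]

theorem hasseDeriv_monomial_prime_pow_of_ne {p : ℕ} [CharP R p] (hp : p.Prime) {k j : ℕ}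
    (hk : k ≠ 0) (hkj : k ≠ p ^ j) (c : R) : hasseDeriv k (monomial (p ^ j) c) = 0 := by
  rw [hasseDeriv_monomial, (CharP.cast_eq_zero_iff R p _).mpr (hp.dvd_choose_pow hk hkj),
    zero_mul, monomial_zero_right]

theorem hasseDeriv_prime_pow_sum_C_mul_X_pow_prime_pow {p : ℕ} [CharP R p] (hp : p.Prime)
    (c : ℕ → R) (n h : ℕ) :
    hasseDeriv (p ^ h) (∑ j ∈ range n, C (c j) * X ^ p ^ j) = if h < n then C (c h) else 0 := by
  calc hasseDeriv (p ^ h) (∑ j ∈ range n, C (c j) * X ^ p ^ j)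
      = ∑ j ∈ range n, if h = j then C (c j) else 0 := by
        rw [map_sum]
        refine sum_congr rfl fun j _ => ?_
        rw [C_mul_X_pow_eq_monomial]
        split_ifs with hj
        · rw [hj, hasseDeriv_monomial_self]
        · exact hasseDeriv_monomial_prime_pow_of_ne hp (pow_ne_zero _ hp.ne_zero)
            (fun e => hj (Nat.pow_right_injective hp.two_le e)) (c j)
    _ = if h < n then C (c h) else 0 := by simp [sum_ite_eq]

theorem hasseDeriv_sum_C_mul_X_pow_prime_pow_of_ne {p : ℕ} [CharP R p] (hp : p.Prime)
    (c : ℕ → R) (n : ℕ) {k : ℕ} (hk : k ≠ 0) (hkp : ∀ j, k ≠ p ^ j) :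
    hasseDeriv k (∑ j ∈ range n, C (c j) * X ^ p ^ j) = 0 := by
  rw [map_sum]
  refine sum_eq_zero fun j _ => ?_
  rw [C_mul_X_pow_eq_monomial]
  exact hasseDeriv_monomial_prime_pow_of_ne hp hk (hkp j) _

end HasseDeriv

/-- Let `p` be a prime, `K` a field of characteristic `p`, `n : ℕ`,
and `a₀, …, a_n ∈ K` (given as `a : ℕ → K`).  Let
`w = Σ_{j=0}^{n-1} (∏_{i=0}^{j} (a_n - a_i)) · x^{p^j} ∈ K[x]`.  Then:
(i) for every `h`, the `p^h`-th Hasse derivative of `w` is the constant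
`∏_{i=0}^{h} (a_n - a_i)` (which vanishes for `h ≥ n` because of the factor `i = n`);
(ii) for every `k ≥ 1` that is not a power of `p`, the `k`-th Hasse derivative of `w`
is `0`. -/
theorem hasseDeriv_counterexample_gauge
    (p : ℕ) (hp : p.Prime) (K : Type*) [Field K] [CharP K p] (n : ℕ) (a : ℕ → K) :
    (∀ h : ℕ,
      Polynomial.hasseDeriv (p ^ h)
          (∑ j ∈ Finset.range n,
            Polynomial.C (∏ i ∈ Finset.range (j + 1), (a n - a i)) *
              Polynomial.X ^ (p ^ j)) =
        Polynomial.C (∏ i ∈ Finset.range (h + 1), (a n - a i))) ∧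
    (∀ k : ℕ, 1 ≤ k → (¬ ∃ j : ℕ, k = p ^ j) →
      Polynomial.hasseDeriv k
          (∑ j ∈ Finset.range n,
            Polynomial.C (∏ i ∈ Finset.range (j + 1), (a n - a i)) *
              Polynomial.X ^ (p ^ j)) = 0) := by
  refine ⟨fun h => ?_, fun k hk hkp => ?_⟩
  · rw [hasseDeriv_prime_pow_sum_C_mul_X_pow_prime_pow hp]
    split_ifs with hn
    · rfl
    · have hprod : ∏ i ∈ range (h + 1), (a n - a i) = 0 :=
        prod_eq_zero (mem_range.mpr (by omega)) (sub_self _)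
      rw [hprod, C_0]
  · exact hasseDeriv_sum_C_mul_X_pow_prime_pow_of_ne hp _ n (by omega) (not_exists.mp hkp)
end
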